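/- arXiv:2008.06124 — 3 statements merged into one kernel-verified Lean document; each statement's English description precedes it below -/
import Mathlib

section
/- Let k be a number field of degree d that is not a CM-field, let r be the rank of the unit group O_k^×, and let α_1, …, α_r be multiplicatively independent units in O_k^×. Then k = ℚ(α_1, α_2, …, α_r). -/
open NumberField

/-- A number field is a CM-field if it is a totally imaginary quadratic extension of a totally
real subfield. -/
def IsCMField (K : Type*) [Field K] [NumberField K] : Prop :=
  (∀ w : InfinitePlace K, w.IsComplex) ∧
    ∃ F : IntermediateField ℚ K,
      (∀ w : InfinitePlace F, w.IsReal) ∧ Module.finrank F K = 2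

/-- A family of elements of a commutative group is multiplicatively independent if the only
integer-power product relation among them is the trivial one. -/
def MultIndep {G : Type*} [CommGroup G] {ι : Type*} [Fintype ι] (g : ι → G) : Prop :=
  ∀ m : ι → ℤ, (∏ i, g i ^ m i) = 1 → m = 0

/-!
If the units `α i` lay in a proper subfield `F`, they would be multiplicatively independent
units of `F`, so `rank K ≤ rank F`. But when `K` is not CM, a proper subfield has strictly fewer
infinite places: equal place counts force `[K : F] = 2` with `K` totally complex and `F` totally
real, since `[K : ℚ] ≤ 2 · #places(K)` and `#places(F) ≤ [F : ℚ]`.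
-/

open InfinitePlace IntermediateField

theorem multIndep_iff_linearIndependent {G ι : Type*} [CommGroup G] [Fintype ι] {g : ι → G} :
    MultIndep g ↔ LinearIndependent ℤ (Additive.ofMul ∘ g) := by
  rw [Fintype.linearIndependent_iff, MultIndep]
  refine forall_congr' fun m => ?_
  rw [← ofMul_one, ← Additive.toMul.injective.eq_iff]
  simp [toMul_sum, funext_iff]

theorem MultIndep.of_comp {G H ι : Type*} [CommGroup G] [CommGroup H] [Fintype ι]
    {g : ι → G} (f : G →* H) (h : MultIndep (f ∘ g)) : MultIndep g := fun m hm =>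
  h m (by simpa using congrArg f hm)

theorem MultIndep.card_le_units_rank {K ι : Type*} [Field K] [NumberField K] [Fintype ι]
    {u : ι → (𝓞 K)ˣ} (hu : MultIndep u) : Fintype.card ι ≤ Units.rank K :=
  Units.finrank_eq K ▸ (multIndep_iff_linearIndependent.mp hu).fintype_card_le_finrank

namespace NumberField

theorem RingOfIntegers.exists_algebraMap_eq_of_mem {K : Type*} [Field K] [CharZero K]
    {F : IntermediateField ℚ K} (x : 𝓞 K) (hx : (x : K) ∈ F) : ∃ y : 𝓞 F, algebraMap (𝓞 F) (𝓞 K) y = x := by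
  have hint : IsIntegral ℤ (⟨x, hx⟩ : F) := by
    rw [← isIntegral_algebraMap_iff (algebraMap F K).injective]
    exact x.isIntegral_coe
  exact ⟨⟨_, hint⟩, rfl⟩

theorem Units.exists_map_algebraMap_eq_of_mem {K : Type*} [Field K] [CharZero K]
    {F : IntermediateField ℚ K} (u : (𝓞 K)ˣ) (hu : (u : K) ∈ F) :
    ∃ v : (𝓞 F)ˣ, Units.map (algebraMap (𝓞 F) (𝓞 K)) v = u := by
  obtain ⟨y, hy⟩ := RingOfIntegers.exists_algebraMap_eq_of_mem (u : 𝓞 K) hu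
  have hunit : IsUnit y := isUnit_of_map_unit _ y (hy ▸ u.isUnit)
  exact ⟨hunit.unit, Units.ext hy⟩

end NumberField

theorem isCMField_of_card_infinitePlace_eq {K : Type*} [Field K] [NumberField K]
    {F : IntermediateField ℚ K} (hF : F ≠ ⊤)
    (hcard : Fintype.card (InfinitePlace F) = Fintype.card (InfinitePlace K)) :
    _root_.IsCMField K := by
  have hdeg : 2 ≤ Module.finrank F K := by
    have := (finrank_eq_one_iff_eq_top (K := F)).not.mpr hF
    have := Module.finrank_pos (R := F) (M := K)
    omega
  have htower := Module.finrank_mul_finrank ℚ F K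
  have hdegF := card_add_two_mul_card_eq_rank F
  have hdegK := card_add_two_mul_card_eq_rank K
  rw [card_eq_nrRealPlaces_add_nrComplexPlaces, card_eq_nrRealPlaces_add_nrComplexPlaces] at hcard
  have hle : Module.finrank ℚ F * 2 ≤ Module.finrank ℚ K :=
    htower ▸ Nat.mul_le_mul_left _ hdeg
  -- `[K : ℚ] ≤ 2 · #places(K) = 2 · #places(F) ≤ 2 [F : ℚ]`, so every inequality is an equality.
  have hrealK : nrRealPlaces K = 0 := by omega
  have hcomplexF : nrComplexPlaces F = 0 := by omega
  have hposF : 0 < Module.finrank ℚ F := Module.finrank_pos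
  refine ⟨(nrRealPlaces_eq_zero_iff.mp hrealK).isComplex,
    F, (nrComplexPlaces_eq_zero_iff.mp hcomplexF).isReal, ?_⟩
  exact Nat.eq_of_mul_eq_mul_left hposF (by omega)

theorem card_infinitePlace_lt_of_not_isCMField {K : Type*} [Field K] [NumberField K]
    (hCM : ¬ _root_.IsCMField K) {F : IntermediateField ℚ K} (hF : F ≠ ⊤) :
    Fintype.card (InfinitePlace F) < Fintype.card (InfinitePlace K) :=
  (card_mono F K).lt_of_ne fun hcard => hCM (isCMField_of_card_infinitePlace_eq hF hcard)

/-- **(Akhtari–Vaaler, (5.3)).**  If `k` is a number field that is not a CM-field, with unit rank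
`r`, and `α_1, …, α_r` are multiplicatively independent units in `O_k^×`, then
`k = ℚ(α_1, …, α_r)`. -/
theorem adjoin_indep_units_eq_top (K : Type*) [Field K] [NumberField K]
    (hCM : ¬ _root_.IsCMField K) (r : ℕ) (hr : r = NumberField.Units.rank K)
    (α : Fin r → (𝓞 K)ˣ) (hα : MultIndep α) :
    IntermediateField.adjoin ℚ (Set.range fun i => ((α i : 𝓞 K) : K)) = ⊤ := by
  set F := IntermediateField.adjoin ℚ (Set.range fun i => ((α i : 𝓞 K) : K))
  by_contra hF
  have hmem (i : Fin r) : ((α i : 𝓞 K) : K) ∈ F := subset_adjoin ℚ _ ⟨i, rfl⟩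
  choose β hβ using fun i => Units.exists_map_algebraMap_eq_of_mem (α i) (hmem i)
  have hβ_indep : MultIndep β :=
    MultIndep.of_comp _ (by rwa [show _ ∘ β = α from funext hβ])
  have hrF : r ≤ Units.rank F := by simpa using hβ_indep.card_le_units_rank
  have hlt := card_infinitePlace_lt_of_not_isCMField hCM hF
  have := Fintype.card_pos (α := InfinitePlace F)
  rw [Units.rank] at hrF hr
  omega
end

section
/- Let k be a number field of degree d, and for subfields k' of k define λ(k') to be the maximum length of a tower of distinct subfields of k beginning at ℚ and ending at k' (with λ(ℚ) = 0), and ℵ(k') = (2·[k : k'])^{λ(k') - λ(k)}. If ℚ ⊆ k_1 ⊆ k_2 ⊆ ⋯ ⊆ k_{N-1} ⊆ k_N = k is a tower of N+1 pairwise distinct number fields, then 0 < ℵ(ℚ) < ℵ(k_1) < ℵ(k_2) < ⋯ < ℵ(k_{N-1}) < ℵ(k_N) = 1. -/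
/-- `lambdaTower K F` is the maximum length of a tower of distinct subfields of `K` beginning at
`ℚ` and ending at `F` (so `lambdaTower K ⊥ = 0`). -/
noncomputable def lambdaTower (K : Type*) [Field K] [NumberField K]
    (F : IntermediateField ℚ K) : ℕ :=
  sSup {n | ∃ c : Fin (n + 1) → IntermediateField ℚ K,
    StrictMono c ∧ c 0 = ⊥ ∧ c (Fin.last n) = F}

/-- `aleph K F = (2 [K : F])^{λ(F) - λ(K)}`. -/
noncomputable def aleph (K : Type*) [Field K] [NumberField K]
    (F : IntermediateField ℚ K) : ℝ :=
  (2 * (Module.finrank F K : ℝ)) ^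
    ((lambdaTower K F : ℤ) - (lambdaTower K (⊤ : IntermediateField ℚ K) : ℤ))

/-!
A maximal tower ending at `F` extends by any `E ⊋ F`, so `λ` is strictly increasing on the
(finite) lattice of subfields of `k`, while `[k : F]` decreases. Hence along `F ⊊ E` the base of
`ℵ` shrinks but stays above `1`, and the exponent `λ(·) - λ(k) ≤ 0` strictly increases.
-/

section BottomChains

variable {α : Type*}

-- `lambdaTower K F` is `sSup (bottomChainLengths F)` by definition.
def bottomChainLengths [Preorder α] [OrderBot α] (a : α) : Set ℕ :=
  {n | ∃ c : Fin (n + 1) → α, StrictMono c ∧ c 0 = ⊥ ∧ c (Fin.last n) = a}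

theorem bottomChainLengths_nonempty [PartialOrder α] [OrderBot α] (a : α) :
    (bottomChainLengths a).Nonempty := by
  rcases eq_or_ne a ⊥ with rfl | ha
  · exact ⟨0, fun _ => ⊥, Fin.strictMono_iff_lt_succ.2 fun i => i.elim0, rfl, rfl⟩
  · exact ⟨1, ![⊥, a], Fin.strictMono_iff_lt_succ.2 (by simpa [bot_lt_iff_ne_bot]), rfl, rfl⟩

theorem bottomChainLengths_bddAbove [Preorder α] [OrderBot α] [Finite α] (a : α) :
    BddAbove (bottomChainLengths a) := by
  refine ⟨Nat.card α, fun n ⟨c, hc, _, _⟩ => ?_⟩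
  have := Nat.card_le_card_of_injective c hc.injective
  rw [Nat.card_eq_fintype_card, Fintype.card_fin] at this
  omega

theorem add_one_mem_bottomChainLengths [Preorder α] [OrderBot α] {a b : α} {n : ℕ}
    (hn : n ∈ bottomChainLengths a) (hab : a < b) : n + 1 ∈ bottomChainLengths b := by
  obtain ⟨c, hc, hc0, hcl⟩ := hn
  refine ⟨Fin.snoc c b, ?_, ?_, Fin.snoc_last ..⟩
  · simpa [Fin.insertNth_last'] using Fin.strictMono_insertNth_last hc b (hcl ▸ hab)
  · rw [← Fin.castSucc_zero, Fin.snoc_castSucc]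
    exact hc0

theorem strictMono_sSup_bottomChainLengths [PartialOrder α] [OrderBot α] [Finite α] :
    StrictMono fun a : α => sSup (bottomChainLengths a) := fun a b hab =>
  (Nat.lt_succ_self _).trans_le <| le_csSup (bottomChainLengths_bddAbove b) <|
    add_one_mem_bottomChainLengths
      (Nat.sSup_mem (bottomChainLengths_nonempty a) (bottomChainLengths_bddAbove a)) hab

end BottomChains

theorem zpow_le_zpow_left_of_nonpos₀ {R : Type*} [Field R] [LinearOrder R] [IsStrictOrderedRing R]
    {a b : R} {n : ℤ} (hn : n ≤ 0) (ha : 0 < a) (hab : a ≤ b) : b ^ n ≤ a ^ n := by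
  simpa only [zpow_neg, inv_inv] using
    inv_anti₀ (zpow_pos ha (-n)) (zpow_le_zpow_left₀ (neg_nonneg.2 hn) ha.le hab)

theorem finite_intermediateField_of_isSeparable (F E : Type*) [Field F] [Field E] [Algebra F E]
    [FiniteDimensional F E] [Algebra.IsSeparable F E] : Finite (IntermediateField F E) :=
  Field.finite_intermediateField_of_exists_primitive_element F E
    (Field.exists_primitive_element F E)

section NumberField

variable (K : Type*) [Field K] [NumberField K]

theorem lambdaTower_strictMono : StrictMono (lambdaTower K) :=
  have := finite_intermediateField_of_isSeparable ℚ K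
  strictMono_sSup_bottomChainLengths

theorem one_lt_two_mul_finrank (F : IntermediateField ℚ K) :
    1 < 2 * (Module.finrank F K : ℝ) := by
  have : (1 : ℝ) ≤ Module.finrank F K := by exact_mod_cast Module.finrank_pos
  linarith

theorem aleph_pos (F : IntermediateField ℚ K) : 0 < aleph K F :=
  zpow_pos (one_pos.trans (one_lt_two_mul_finrank K F)) _

theorem aleph_top : aleph K ⊤ = 1 := by
  rw [aleph, sub_self, zpow_zero]

theorem aleph_strictMono : StrictMono (aleph K) := by
  intro F E hFE
  have hlam : lambdaTower K F < lambdaTower K E := lambdaTower_strictMono K hFE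
  have hlamE : lambdaTower K E ≤ lambdaTower K ⊤ := (lambdaTower_strictMono K).monotone le_top
  have hdeg : (Module.finrank E K : ℝ) ≤ Module.finrank F K := by
    exact_mod_cast IntermediateField.finrank_le_of_le_left hFE.le
  calc aleph K F
      ≤ (2 * (Module.finrank E K : ℝ)) ^
          ((lambdaTower K F : ℤ) - (lambdaTower K ⊤ : ℤ)) :=
        zpow_le_zpow_left_of_nonpos₀ (by omega)
          (one_pos.trans (one_lt_two_mul_finrank K E)) (by linarith)
    _ < aleph K E := zpow_lt_zpow_right₀ (one_lt_two_mul_finrank K E) (by omega)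

end NumberField

theorem aleph_strictMono_on_tower_general (K : Type*) [Field K] [NumberField K]
    (N : ℕ) (c : Fin (N + 1) → IntermediateField ℚ K)
    (hmono : StrictMono c) (hlast : c (Fin.last N) = ⊤) :
    0 < aleph K (c 0) ∧
      StrictMono (fun i => aleph K (c i)) ∧
      aleph K (c (Fin.last N)) = 1 :=
  ⟨aleph_pos K _, (aleph_strictMono K).comp hmono, by rw [hlast, aleph_top]⟩

/-- **(Akhtari–Vaaler, Lemma 6.1).**  If `ℚ ⊆ k_1 ⊆ ⋯ ⊆ k_N = k` is a tower of `N+1` pairwise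
distinct subfields of a number field `k`, then
`0 < ℵ(ℚ) < ℵ(k_1) < ⋯ < ℵ(k_{N-1}) < ℵ(k_N) = 1`. -/
theorem aleph_strictMono_on_tower (K : Type*) [Field K] [NumberField K]
    (N : ℕ) (c : Fin (N + 1) → IntermediateField ℚ K)
    (hmono : StrictMono c) (h0 : c 0 = ⊥) (hlast : c (Fin.last N) = ⊤) :
    0 < aleph K (c 0) ∧
      StrictMono (fun i => aleph K (c i)) ∧
      aleph K (c (Fin.last N)) = 1 :=
  aleph_strictMono_on_tower_general K N c hmono hlast
end

section
/- Let k ⊆ l be number fields with r(l) > r(k). For each archimedean place v of k choose a place ŵ_v of l above v, let T_v be the set of places of l above v other than ŵ_v, and let S(l/k) = ∪_{v|∞} T_v, a set of cardinality r(l/k) = r(l) - r(k). On ℝ^{S(l/k)} define the generalized Schinzel norm ∇(x) = Σ_{v|∞} δ(π_{T_v}(x)), where δ(y) = (1/2)|Σ_s y_s| + (1/2)Σ_s |y_s| and π_{T_v} is the coordinate projection onto the subspace of vectors supported on T_v. If α ∈ F_l is a relative unit in E_{l/k}, and x(α) = ([l_w : ℚ_w]·log‖α‖_w)_{w ∈ S(l/k)},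 then ∇(x(α)) = [l : ℚ]·h(α). -/
/-! For a relative unit `α` the local norm identity
`∏_{w ∣ v} ‖α‖_w ^ [l_w : ℚ_w] = ‖N_{l/k} α‖_v ^ [k_v : ℚ_v] = 1` says that the coordinates
`a_w = [l_w : ℚ_w] log ‖α‖_w` sum to zero over the places above each `v`. So the coordinate at
`ŵ_v` is minus the sum over `T_v`, and `δ(π_{T_v} x(α)) = ½ Σ_{w ∣ v} |a_w|`. On the other side,
`α` is a unit, so `[l : ℚ] h(α) = Σ_w max(0, a_w)`, which is `½ Σ_w |a_w|` because `Σ_w a_w = 0`. -/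

open NumberField

/-- The homomorphism `F_l → F_k` on unit groups modulo torsion induced by the relative norm. -/
noncomputable def relNormMap (K L : Type*) [Field K] [NumberField K] [Field L] [NumberField L]
    [Algebra K L] :
    ((𝓞 L)ˣ ⧸ NumberField.Units.torsion L) →* ((𝓞 K)ˣ ⧸ NumberField.Units.torsion K) :=
  QuotientGroup.map _ _ (Units.map (RingOfIntegers.norm K : 𝓞 L →* 𝓞 K))
    (fun x hx => (CommGroup.mem_torsion _).2
      ((Units.map (RingOfIntegers.norm K : 𝓞 L →* 𝓞 K)).isOfFinOrder
        ((CommGroup.mem_torsion _).1 hx)))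

/-- The group `E_{l/k}` of relative units: the kernel of the norm map `F_l → F_k`. -/
noncomputable def relUnits (K L : Type*) [Field K] [NumberField K] [Field L] [NumberField L]
    [Algebra K L] : Subgroup ((𝓞 L)ˣ ⧸ NumberField.Units.torsion L) :=
  (relNormMap K L).ker

/-- The homomorphism `F_k → F_l` induced by the inclusion `O_k ⊆ O_l`. -/
noncomputable def inclMap (K L : Type*) [Field K] [NumberField K] [Field L] [NumberField L]
    [Algebra K L] :
    ((𝓞 K)ˣ ⧸ NumberField.Units.torsion K) →* ((𝓞 L)ˣ ⧸ NumberField.Units.torsion L) :=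
  QuotientGroup.map _ _ (Units.map (algebraMap (𝓞 K) (𝓞 L) : 𝓞 K →* 𝓞 L))
    (fun x hx => (CommGroup.mem_torsion _).2
      ((Units.map (algebraMap (𝓞 K) (𝓞 L) : 𝓞 K →* 𝓞 L)).isOfFinOrder
        ((CommGroup.mem_torsion _).1 hx)))

/-- The denominator ideal of an element `α` of a number field `K`. -/
noncomputable def denIdeal (K : Type*) [Field K] [NumberField K] (α : K) : Ideal (𝓞 K) :=
  Submodule.colon (1 : Submodule (𝓞 K) K) (Submodule.span (𝓞 K) {α})

/-- The absolute logarithmic Weil height `h(α) = Σ_v log⁺ |α|_v` of an element `α` of a number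
field `K`.  The nonarchimedean contribution is computed as the logarithm of the absolute norm of
the denominator ideal of `α`. -/
noncomputable def logHeight {K : Type*} [Field K] [NumberField K] (α : K) : ℝ :=
  (Module.finrank ℚ K : ℝ)⁻¹ *
    ((∑ w : InfinitePlace K, (w.mult : ℝ) * Real.log (max 1 (w α))) +
      Real.log (Ideal.absNorm (denIdeal K α)))

open Real NumberField.InfinitePlace Finset

theorem Finset.abs_sum_erase_add_sum_abs_erase {ι α : Type*} [DecidableEq ι] [AddCommGroup α]
    [LinearOrder α] [IsOrderedAddMonoid α] {s : Finset ι} {i : ι} (hi : i ∈ s) {f : ι → α}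
    (hf : ∑ j ∈ s, f j = 0) :
    |∑ j ∈ s.erase i, f j| + ∑ j ∈ s.erase i, |f j| = ∑ j ∈ s, |f j| := by
  have hrest : ∑ j ∈ s.erase i, f j = -f i :=
    eq_neg_of_add_eq_zero_left (by rwa [sum_erase_add _ _ hi])
  rw [hrest, abs_neg, add_sum_erase s (fun j => |f j|) hi]

theorem Real.sum_mul_posLog_eq_half_sum_abs {ι : Type*} (s : Finset ι) {c t : ι → ℝ}
    (hc : ∀ i ∈ s, 0 ≤ c i) (h : ∑ i ∈ s, c i * log (t i) = 0) :
    ∑ i ∈ s, c i * log⁺ (t i) = 2⁻¹ * ∑ i ∈ s, |c i * log (t i)| := by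
  have hterm : ∀ i ∈ s,
      c i * log⁺ (t i) = 2⁻¹ * (c i * log (t i) + |c i * log (t i)|) := by
    intro i hi
    rw [← half_mul_log_add_log_abs, abs_mul, abs_of_nonneg (hc i hi)]
    ring
  rw [sum_congr rfl hterm, ← mul_sum, sum_add_distrib, h, zero_add]

theorem Finset.prod_filter_comp_eq_prod_fiberwise {ι κ M : Type*} [CommMonoid M]
    [Fintype ι] [Fintype κ] [DecidableEq κ] (g : ι → κ) (P : κ → Prop) [DecidablePred P]
    (f : ι → M) :
    ∏ i ∈ {i | P (g i)}, f i = ∏ j ∈ {j | P j}, ∏ i ∈ {i | g i = j}, f i := by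
  rw [prod_fiberwise_eq_prod_filter]
  simp only [mem_filter, mem_univ, true_and]

namespace NumberField.InfinitePlace

variable {K L : Type*} [Field K] [NumberField K] [Field L] [NumberField L] [Algebra K L]

open scoped Classical in
theorem prod_filter_mk_eq_norm_apply (w : InfinitePlace K) (x : K) :
    ∏ φ ∈ {φ : K →+* ℂ | mk φ = w}, ‖φ x‖ = w x ^ mult w := by
  have hφ : ∀ φ ∈ ({φ | mk φ = w} : Finset (K →+* ℂ)), ‖φ x‖ = w x :=
    fun φ hφ => by rw [← (mem_filter.mp hφ).2, apply]
  rw [prod_congr rfl hφ, prod_const, card_filter_mk_eq]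

open scoped Classical in
theorem prod_filter_mk_norm_apply (P : InfinitePlace K → Prop) (x : K) :
    ∏ φ ∈ {φ : K →+* ℂ | P (mk φ)}, ‖φ x‖ = ∏ w ∈ {w | P w}, w x ^ mult w := by
  rw [prod_filter_comp_eq_prod_fiberwise mk P]
  exact prod_congr rfl fun w _ => prod_filter_mk_eq_norm_apply w x

open scoped Classical in
theorem prod_filter_comp_eq_norm_apply (φ : K →+* ℂ) (x : L) :
    ∏ ψ ∈ {ψ : L →+* ℂ | ψ.comp (algebraMap K L) = φ}, ‖ψ x‖ =
      ‖φ (Algebra.norm K x)‖ := by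
  let _ : Algebra K ℂ := φ.toAlgebra
  have : FiniteDimensional K L := Module.Finite.of_restrictScalars_finite ℚ K L
  rw [show φ (Algebra.norm K x) = algebraMap K ℂ (Algebra.norm K x) from rfl,
    Algebra.norm_eq_prod_embeddings, norm_prod]
  symm
  refine prod_bij (fun σ _ => (σ : L →+* ℂ)) (fun σ _ => ?_)
    (fun σ _ τ _ h => AlgHom.coe_ringHom_injective h) (fun ψ hψ => ?_) (fun _ _ => rfl)
  · exact mem_filter.mpr ⟨mem_univ _, RingHom.ext σ.commutes⟩
  · exact ⟨⟨ψ, fun k => RingHom.congr_fun (mem_filter.mp hψ).2 k⟩, mem_univ _, rfl⟩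

open scoped Classical in
theorem prod_comap_eq_pow_mult (v : InfinitePlace K) (x : L) :
    ∏ w ∈ {w : InfinitePlace L | w.comap (algebraMap K L) = v}, w x ^ mult w =
      v (Algebra.norm K x) ^ mult v := by
  rw [← prod_filter_mk_norm_apply, ← prod_filter_mk_eq_norm_apply]
  -- `(mk ψ).comap f = mk (ψ.comp f)` holds definitionally
  show ∏ ψ ∈ {ψ : L →+* ℂ | mk (ψ.comp (algebraMap K L)) = v}, ‖ψ x‖ = _
  rw [prod_filter_comp_eq_prod_fiberwise (fun ψ : L →+* ℂ => ψ.comp (algebraMap K L))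
    (mk · = v)]
  exact prod_congr rfl fun φ _ => prod_filter_comp_eq_norm_apply φ x

open scoped Classical in
theorem sum_comap_mult_mul_log (v : InfinitePlace K) {x : L} (hx : x ≠ 0) :
    ∑ w ∈ {w : InfinitePlace L | w.comap (algebraMap K L) = v}, (mult w : ℝ) * log (w x) =
      mult v * log (v (Algebra.norm K x)) := by
  simpa [log_prod fun w _ => pow_ne_zero _ (pos_iff.mpr hx).ne', log_pow] using
    congrArg log (prod_comap_eq_pow_mult v x)

end NumberField.InfinitePlace

theorem apply_algebraNorm_eq_one_of_mem_relUnits {K L : Type*} [Field K] [NumberField K]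
    [Field L] [NumberField L] [Algebra K L] {α : (𝓞 L)ˣ}
    (hα : (α : (𝓞 L)ˣ ⧸ Units.torsion L) ∈ relUnits K L) (v : InfinitePlace K) :
    v (Algebra.norm K ((α : 𝓞 L) : L)) = 1 := by
  have hN : Units.map (RingOfIntegers.norm K : 𝓞 L →* 𝓞 K) α ∈ Units.torsion K :=
    (QuotientGroup.eq_one_iff _).mp hα
  simpa using (Units.mem_torsion K).mp hN v

section

variable {K : Type*} [Field K] [NumberField K]

theorem denIdeal_coe_eq_top (x : 𝓞 K) : denIdeal K x = ⊤ := by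
  refine eq_top_iff.mpr fun r _ => Submodule.mem_colon.mpr fun p hp => Submodule.smul_mem _ r ?_
  exact (Submodule.span_singleton_le_iff_mem _ _).mpr (Submodule.mem_one.mpr ⟨x, rfl⟩) hp

theorem finrank_mul_logHeight_coe (x : 𝓞 K) :
    (Module.finrank ℚ K : ℝ) * logHeight (x : K) =
      ∑ w : InfinitePlace K, (mult w : ℝ) * log⁺ (w x) := by
  have hK : (Module.finrank ℚ K : ℝ) ≠ 0 := Nat.cast_ne_zero.mpr Module.finrank_pos.ne'
  simp_rw [logHeight, denIdeal_coe_eq_top, Ideal.absNorm_top, Nat.cast_one, log_one, add_zero,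
    ← mul_assoc, mul_inv_cancel₀ hK, one_mul, posLog_eq_log_max_one (apply_nonneg _ _)]

end

open scoped Classical in
theorem nabla_eq_height_of_relUnit_general (K L : Type*) [Field K] [NumberField K]
    [Field L] [NumberField L] [Algebra K L]
    (hw : InfinitePlace K → InfinitePlace L)
    (hw_sec : ∀ v, (hw v).comap (algebraMap K L) = v)
    (α : (𝓞 L)ˣ)
    (hα : (↑α : (𝓞 L)ˣ ⧸ NumberField.Units.torsion L) ∈ relUnits K L) :
    (∑ v : InfinitePlace K,
        ((1 / 2 : ℝ) *
            |∑ w ∈ Finset.univ.filter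
                (fun w : InfinitePlace L => w.comap (algebraMap K L) = v ∧ w ≠ hw v),
              (w.mult : ℝ) * Real.log (w ((α : 𝓞 L) : L))| +
          (1 / 2 : ℝ) *
            ∑ w ∈ Finset.univ.filter
                (fun w : InfinitePlace L => w.comap (algebraMap K L) = v ∧ w ≠ hw v),
              |(w.mult : ℝ) * Real.log (w ((α : 𝓞 L) : L))|)) =
      (Module.finrank ℚ L : ℝ) * logHeight ((α : 𝓞 L) : L) := by
  set x : L := ((α : 𝓞 L) : L)
  set a : InfinitePlace L → ℝ := fun w => (w.mult : ℝ) * log (w x)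
  have hv : ∀ v, ∑ w ∈ {w : InfinitePlace L | w.comap (algebraMap K L) = v}, a w = 0 :=
    fun v => by
      rw [sum_comap_mult_mul_log v (Units.coe_ne_zero α),
        apply_algebraNorm_eq_one_of_mem_relUnits hα, log_one, mul_zero]
  have hTv : ∀ v, ({w : InfinitePlace L | w.comap (algebraMap K L) = v ∧ w ≠ hw v} : Finset _) =
      ({w : InfinitePlace L | w.comap (algebraMap K L) = v} : Finset _).erase (hw v) := fun v =>
    Finset.ext fun w => by simp [and_comm]
  have hfib := fun f : InfinitePlace L → ℝ => sum_fiberwise univ (·.comap (algebraMap K L)) f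
  calc _ = ∑ v : InfinitePlace K,
        (1 / 2 : ℝ) * ∑ w ∈ {w : InfinitePlace L | w.comap (algebraMap K L) = v}, |a w| := by
        refine sum_congr rfl fun v _ => ?_
        rw [hTv, ← mul_add, abs_sum_erase_add_sum_abs_erase (by simpa using hw_sec v) (hv v)]
    _ = 2⁻¹ * ∑ w, |a w| := by rw [← mul_sum, hfib, one_div]
    _ = ∑ w : InfinitePlace L, (w.mult : ℝ) * log⁺ (w x) :=
        (Real.sum_mul_posLog_eq_half_sum_abs _ (fun _ _ => Nat.cast_nonneg _)
          (by rw [← hfib]; exact sum_eq_zero fun v _ => hv v)).symm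
    _ = _ := (finrank_mul_logHeight_coe (α : 𝓞 L)).symm

open scoped Classical in
/-- **(Akhtari–Vaaler, Lemma 7.1).**  Let `k ⊆ l` be number fields with `r(l) > r(k)`.  For
each archimedean place `v` of `k` choose a place `ŵ_v` of `l` above `v`, and let
`T_v` be the set of remaining places of `l` above `v`.  If `α` is a relative unit in
`E_{l/k}` and `x(α) = ([l_w : ℚ_w] log ‖α‖_w)_w`, then the generalized Schinzel norm
`∇(x(α)) = Σ_v ((1/2)|Σ_{w ∈ T_v} x(α)_w| + (1/2) Σ_{w ∈ T_v} |x(α)_w|)` equals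
`[l : ℚ] h(α)`. -/
theorem nabla_eq_height_of_relUnit (K L : Type*) [Field K] [NumberField K]
    [Field L] [NumberField L] [Algebra K L]
    (hrank : NumberField.Units.rank K < NumberField.Units.rank L)
    (hw : InfinitePlace K → InfinitePlace L)
    (hw_sec : ∀ v, (hw v).comap (algebraMap K L) = v)
    (α : (𝓞 L)ˣ)
    (hα : (↑α : (𝓞 L)ˣ ⧸ NumberField.Units.torsion L) ∈ relUnits K L) :
    (∑ v : InfinitePlace K,
        ((1 / 2 : ℝ) *
            |∑ w ∈ Finset.univ.filter
                (fun w : InfinitePlace L => w.comap (algebraMap K L) = v ∧ w ≠ hw v),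
              (w.mult : ℝ) * Real.log (w ((α : 𝓞 L) : L))| +
          (1 / 2 : ℝ) *
            ∑ w ∈ Finset.univ.filter
                (fun w : InfinitePlace L => w.comap (algebraMap K L) = v ∧ w ≠ hw v),
              |(w.mult : ℝ) * Real.log (w ((α : 𝓞 L) : L))|)) =
      (Module.finrank ℚ L : ℝ) * logHeight ((α : 𝓞 L) : L) :=
  nabla_eq_height_of_relUnit_general K L hw hw_sec α hα
end
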